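/- Let q be a prime power and G a simple graph on vertex set {1,…,ℓ}, and let e = {i₁,i₂} be an edge of G. Let G∖e be the graph obtained by deleting the edge e, and let G/e be the simple graph on {1,…,ℓ}∖{i₂} whose edges are the sets σ(f) of cardinality 2, for f an edge of G, where σ fixes every point except that it sends i₂ to i₁. Then for every integer t, χ(S_G^q, t) = χ(S_{G∖e}^q, t) − (q−1)·χ(S_{G/e}^q, t). -/

import Mathlib

/-!
Write `B = S_{G∖e}^q` and `H_c = {x_{i₁} = c x_{i₂}}` for `c ∈ 𝔽_q^×`, so that `S_G^q` is
the disjoint union of `B` and the pencil `{H_c}`. Any two members of the pencil meet in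
`K = {x_{i₁} = x_{i₂} = 0}`, so expanding `χ(S_G^q)` over subsets of the pencil leaves
`χ(B) - Σ_c χ_{H_c}(B) + (q - 2) χ_K(B)`, where `χ_W(B)` is the characteristic polynomial
of `B` restricted to `W`. The last term vanishes: `{x_{i₁} = 0} ∈ B` contains `K`, and
adding it to or removing it from a subset only changes the sign. Finally
`H_c ≅ 𝔽_q^{ℓ-1}` by forgetting `x_{i₂}`, and under this identification `B` restricts to
`S_{G/e}^q`. Different hyperplanes of `B` may restrict to the same one, but repeated
hyperplanes cancel in the alternating sum, so `χ_{H_c}(B) = χ(S_{G/e}^q)`.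
-/

open Finset
open scoped Classical

/-- The characteristic polynomial of a finite set of (hyper)planes, evaluated at an
integer `t`:  `χ(A,t) = Σ_{I ⊆ A} (−1)^{|I|} t^{dim ∩_{H ∈ I} H}`, the empty
intersection being the whole space. -/
noncomputable def chi {K V : Type} [Field K] [Fintype V]
    (A : Finset (Submodule K (V → K))) (t : ℤ) : ℤ :=
  ∑ I ∈ A.powerset, (-1) ^ I.card * t ^ (Module.finrank K ↥(I.inf id))
/-- The arrangement `S_G^q`: the coordinate hyperplanes `{x_i = 0}` together with the
hyperplanes `{x_i − c x_j = 0}` for every edge `{i,j}` of `G` and every `c ≠ 0`. -/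
noncomputable def graphArr (K : Type) [Field K] [Fintype K] {V : Type} [Fintype V]
    (G : SimpleGraph V) : Finset (Submodule K (V → K)) :=
  (Finset.univ.image fun i : V =>
      LinearMap.ker (LinearMap.proj i : (V → K) →ₗ[K] K)) ∪
  (((Finset.univ : Finset (V × V × K)).filter
      (fun p => G.Adj p.1 p.2.1 ∧ p.2.2 ≠ 0)).image
    (fun p => LinearMap.ker
      ((LinearMap.proj p.1 : (V → K) →ₗ[K] K) - p.2.2 • LinearMap.proj p.2.1)))

namespace Finset

variable {α L R : Type*} [DecidableEq α] [SemilatticeInf L] [OrderTop L] [CommRing R]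

theorem sum_powerset_neg_one_pow_mul_eq_zero {s : Finset α} {a : α} (ha : a ∈ s)
    (φ : Finset α → R) (hφ : ∀ I, φ (insert a I) = φ I) :
    ∑ I ∈ s.powerset, (-1) ^ I.card * φ I = 0 := by
  rw [← insert_erase ha, sum_powerset_insert (notMem_erase a s), ← sum_add_distrib]
  refine sum_eq_zero fun I hI => ?_
  have haI : a ∉ I := fun h => notMem_erase a s (mem_powerset.1 hI h)
  rw [card_insert_of_notMem haI, hφ, pow_succ]
  ring

theorem sum_powerset_insert_neg_one_pow_mul_inf {s : Finset α} {a : α} (ha : a ∉ s)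
    (r : α → L) (g : L → R) :
    ∑ I ∈ (insert a s).powerset, (-1) ^ I.card * g (I.inf r)
      = ∑ I ∈ s.powerset, (-1) ^ I.card * g (I.inf r)
        - ∑ I ∈ s.powerset, (-1) ^ I.card * g (r a ⊓ I.inf r) := by
  rw [sum_powerset_insert ha, sub_eq_add_neg, ← sum_neg_distrib]
  congr 1
  refine sum_congr rfl fun I hI => ?_
  rw [card_insert_of_notMem fun h => ha (mem_powerset.1 hI h), inf_insert, pow_succ]
  ring

/-- If `r a` already is an `r`-image of `s`, the subsets containing `a` cancel in pairs. -/
theorem sum_powerset_neg_one_pow_mul_inf_image [DecidableEq L] (s : Finset α) (r : α → L)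
    (g : L → R) :
    ∑ I ∈ s.powerset, (-1) ^ I.card * g (I.inf r)
      = ∑ S ∈ (s.image r).powerset, (-1) ^ S.card * g (S.inf id) := by
  induction s using Finset.induction_on generalizing g with
  | empty => simp
  | @insert a s ha ih =>
    rw [sum_powerset_insert_neg_one_pow_mul_inf ha, image_insert]
    by_cases hra : r a ∈ s.image r
    · obtain ⟨b, hb, hba⟩ := mem_image.1 hra
      rw [insert_eq_of_mem hra, ← ih, sub_eq_self]
      exact sum_powerset_neg_one_pow_mul_eq_zero hb (fun I => g (r a ⊓ I.inf r))
        fun I => by simp only [inf_insert, ← inf_assoc, hba, inf_idem]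
    · rw [sum_powerset_insert_neg_one_pow_mul_inf hra, ih, ih fun x => g (r a ⊓ x)]
      rfl

theorem sum_powerset_union_neg_one_pow_mul_inf [DecidableEq L] {B C : Finset L}
    (hBC : Disjoint B C) (g : L → R) :
    ∑ I ∈ (B ∪ C).powerset, (-1) ^ I.card * g (I.inf id)
      = ∑ J ∈ C.powerset, (-1) ^ J.card *
          ∑ I ∈ B.powerset, (-1) ^ I.card * g (J.inf id ⊓ I.inf id) := by
  induction C using Finset.induction_on generalizing g with
  | empty => simp
  | @insert c C hc ih =>
    have hBC' := disjoint_insert_right.1 hBC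
    rw [union_insert, sum_powerset_insert_neg_one_pow_mul_inf (by simp [hc, hBC'.1]), id_eq,
      ih hBC'.2, ih hBC'.2 fun x => g (c ⊓ x), sum_powerset_insert_neg_one_pow_mul_inf hc
        (g := fun W => ∑ I ∈ B.powerset, (-1) ^ I.card * g (W ⊓ I.inf id))]
    simp only [id, inf_assoc]

theorem inf_eq_of_two_le_card {C J : Finset L} {K : L}
    (hK : ∀ a ∈ C, ∀ b ∈ C, a ≠ b → a ⊓ b = K) (hJ : J ⊆ C) (h2 : 2 ≤ J.card) :
    J.inf id = K := by
  obtain ⟨a, ha, b, hb, hab⟩ := one_lt_card.1 h2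
  refine le_antisymm ?_ (Finset.le_inf fun x hx => ?_)
  · exact (_root_.le_inf (inf_le ha) (inf_le hb)).trans (hK a (hJ ha) b (hJ hb) hab).le
  · obtain ⟨y, hy, hyx⟩ := exists_mem_ne h2 x
    exact (hK x (hJ hx) y (hJ hy) hyx.symm).ge.trans inf_le_left

theorem sum_powerset_neg_one_pow_mul_inf_of_pairwise_inf_eq {C : Finset L} (hC : C.Nonempty)
    {K : L} (hK : ∀ a ∈ C, ∀ b ∈ C, a ≠ b → a ⊓ b = K) (u : L → R) :
    ∑ J ∈ C.powerset, (-1) ^ J.card * u (J.inf id)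
      = u ⊤ - ∑ W ∈ C, u W + (C.card - 1) * u K := by
  have hsplit : ∑ J ∈ C.powerset, (-1) ^ J.card * u (J.inf id)
      = ∑ J ∈ C.powerset, (-1) ^ J.card * (u (J.inf id) - u K) := by
    have h0 : ∑ J ∈ C.powerset, (-1 : R) ^ J.card = 0 := by
      exact_mod_cast congrArg (Int.cast : ℤ → R) (sum_powerset_neg_one_pow_card_of_nonempty hC)
    simp only [mul_sub, sum_sub_distrib, ← sum_mul, h0, zero_mul, sub_zero]
  obtain ⟨n, hn⟩ : ∃ n, C.card = n + 1 := Nat.exists_eq_succ_of_ne_zero hC.card_pos.ne'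
  rw [hsplit, sum_powerset, hn, sum_range_succ', sum_range_succ', sum_eq_zero, powersetCard_zero,
    powersetCard_one, sum_map, ← hn]
  · simp only [sum_singleton, card_empty, inf_empty, card_singleton, inf_singleton,
      Function.Embedding.coeFn_mk, id, ← mul_sum, sum_sub_distrib, sum_const, nsmul_eq_mul]
    ring
  · intro i _
    refine sum_eq_zero fun J hJ => ?_
    rw [mem_powersetCard] at hJ
    rw [inf_eq_of_two_le_card hK hJ.1 (by omega), sub_self, mul_zero]

end Finset

open Module

section RestrictedCharPoly

variable {K : Type} {M : Type*} [Field K] [AddCommGroup M] [Module K M]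

/-- `χ` of the restriction of `A` to `W`, with hyperplanes counted with multiplicity. -/
noncomputable def chiOn (W : Submodule K M) (A : Finset (Submodule K M)) (t : ℤ) : ℤ :=
  ∑ I ∈ A.powerset, (-1) ^ I.card * t ^ finrank K ↥(W ⊓ I.inf id)

theorem chiOn_top {V : Type} [Fintype V] (A : Finset (Submodule K (V → K))) (t : ℤ) :
    chiOn ⊤ A t = chi A t := by
  refine sum_congr rfl fun I _ => ?_
  rw [top_inf_eq]

theorem chi_union {V : Type} [Fintype V] {B C : Finset (Submodule K (V → K))}
    (hBC : Disjoint B C) (t : ℤ) :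
    chi (B ∪ C) t = ∑ J ∈ C.powerset, (-1) ^ J.card * chiOn (J.inf id) B t :=
  sum_powerset_union_neg_one_pow_mul_inf hBC fun W => t ^ finrank K W

theorem chiOn_eq_zero_of_le {W H : Submodule K M} {A : Finset (Submodule K M)} (hH : H ∈ A)
    (hW : W ≤ H) (t : ℤ) : chiOn W A t = 0 :=
  sum_powerset_neg_one_pow_mul_eq_zero hH _ fun I => by
    rw [inf_insert, id, ← inf_assoc, inf_eq_left.2 hW]

theorem finrank_range_inf {M' : Type*} [AddCommGroup M'] [Module K M'] {f : M' →ₗ[K] M}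
    (hf : Function.Injective f) (W : Submodule K M) :
    finrank K ↥(LinearMap.range f ⊓ W) = finrank K ↥(W.comap f) := by
  rw [← Submodule.map_comap_eq]
  exact (Submodule.equivMapOfInjective f hf _).finrank_eq.symm

theorem chiOn_range {V : Type} [Fintype V] {f : (V → K) →ₗ[K] M} (hf : Function.Injective f)
    (A : Finset (Submodule K M)) (t : ℤ) :
    chiOn (LinearMap.range f) A t = chi (A.image (Submodule.comap f)) t := by
  refine (sum_congr rfl fun I _ => ?_).trans
    (sum_powerset_neg_one_pow_mul_inf_image A _ fun W : Submodule K (V → K) => t ^ finrank K W)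
  rw [finrank_range_inf hf, Submodule.comap_finsetInf]
  rfl

end RestrictedCharPoly

section Hyperplanes

variable {K V : Type} [Field K]

def coordHyperplane (K : Type) [Field K] (i : V) : Submodule K (V → K) :=
  LinearMap.ker (LinearMap.proj i)

def edgeHyperplane (i j : V) (c : K) : Submodule K (V → K) :=
  LinearMap.ker (LinearMap.proj i - c • LinearMap.proj j)

@[simp] theorem mem_coordHyperplane {i : V} {x : V → K} : x ∈ coordHyperplane K i ↔ x i = 0 :=
  Iff.rfl

@[simp] theorem mem_edgeHyperplane {i j : V} {c : K} {x : V → K} :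
    x ∈ edgeHyperplane i j c ↔ x i = c * x j :=
  sub_eq_zero

theorem mem_graphArr [Fintype K] [Fintype V] {G : SimpleGraph V} {W : Submodule K (V → K)} :
    W ∈ graphArr K G ↔ (∃ i, W = coordHyperplane K i) ∨
      ∃ a b c, G.Adj a b ∧ c ≠ 0 ∧ W = edgeHyperplane a b c := by
  simp only [graphArr, mem_union, mem_image, mem_filter, mem_univ, true_and, Prod.exists,
    coordHyperplane, edgeHyperplane, eq_comm (a := W), and_assoc]

theorem edgeHyperplane_swap {i j : V} {c : K} (hc : c ≠ 0) :
    edgeHyperplane j i c = edgeHyperplane i j c⁻¹ := by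
  ext x
  rw [mem_edgeHyperplane, mem_edgeHyperplane, eq_inv_mul_iff_mul_eq₀ hc, eq_comm]

theorem edgeHyperplane_injective [DecidableEq V] {a b : V} (hab : a ≠ b) :
    Function.Injective (edgeHyperplane a b : K → Submodule K (V → K)) := by
  intro c c' h
  have hx : (fun j => if j = a then c else 1) ∈ edgeHyperplane a b c := by simp [hab.symm]
  rw [h] at hx
  simpa [hab.symm] using hx

theorem edgeHyperplane_inf_edgeHyperplane {a b : V} {c c' : K} (hcc : c ≠ c') :
    edgeHyperplane a b c ⊓ edgeHyperplane a b c' =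
      coordHyperplane K a ⊓ coordHyperplane K b := by
  ext x
  simp only [Submodule.mem_inf, mem_edgeHyperplane, mem_coordHyperplane]
  constructor
  · rintro ⟨h, h'⟩
    have hb : x b = 0 := by
      have : (c - c') * x b = 0 := by rw [sub_mul, ← h, ← h', sub_self]
      exact (mul_eq_zero.1 this).resolve_left (sub_ne_zero.2 hcc)
    exact ⟨by rw [h, hb, mul_zero], hb⟩
  · rintro ⟨ha, hb⟩
    simp [ha, hb]

variable [DecidableEq V]

def coordSupport (W : Submodule K (V → K)) : Set V :=
  {j | Pi.single j 1 ∉ W}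

theorem coordSupport_coordHyperplane (i : V) : coordSupport (coordHyperplane K i) = {i} := by
  ext j
  simp [coordSupport, Pi.single_apply]

theorem coordSupport_edgeHyperplane {a b : V} {c : K} (hab : a ≠ b) (hc : c ≠ 0) :
    coordSupport (edgeHyperplane a b c) = {a, b} := by
  ext j
  simp only [coordSupport, Set.mem_ofPred_eq, mem_edgeHyperplane, Pi.single_apply,
    Set.mem_insert_iff, Set.mem_singleton_iff]
  split_ifs with ha hb hb <;> simp_all [eq_comm]

theorem edgeHyperplane_notMem_graphArr_deleteEdges [Fintype K] [Fintype V] (G : SimpleGraph V)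
    {i₁ i₂ : V} (hne : i₁ ≠ i₂) {c : K} (hc : c ≠ 0) :
    edgeHyperplane i₁ i₂ c ∉ graphArr K (G.deleteEdges {s(i₁, i₂)}) := by
  intro h
  rcases mem_graphArr.1 h with ⟨j, hj⟩ | ⟨a, b, c', hab, hc', hj⟩
  · have hsupp := congrArg coordSupport hj
    rw [coordSupport_edgeHyperplane hne hc, coordSupport_coordHyperplane,
      ← Set.pair_eq_singleton j, Set.pair_eq_pair_iff] at hsupp
    rcases hsupp with ⟨h₁, h₂⟩ | ⟨h₁, h₂⟩ <;> exact hne (h₁.trans h₂.symm)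
  · rw [SimpleGraph.deleteEdges_adj] at hab
    have hsupp := congrArg coordSupport hj
    rw [coordSupport_edgeHyperplane hne hc, coordSupport_edgeHyperplane hab.1.ne hc',
      Set.pair_eq_pair_iff] at hsupp
    apply hab.2
    rw [Set.mem_singleton_iff, Sym2.eq_iff]
    rcases hsupp with ⟨rfl, rfl⟩ | ⟨rfl, rfl⟩
    exacts [Or.inl ⟨rfl, rfl⟩, Or.inr ⟨rfl, rfl⟩]

end Hyperplanes

section Deletion

variable {K V : Type} [Field K] [Fintype K] [Fintype V] {G : SimpleGraph V} {i₁ i₂ : V}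

theorem graphArr_eq_union_deleteEdges (hadj : G.Adj i₁ i₂) :
    graphArr K G = graphArr K (G.deleteEdges {s(i₁, i₂)}) ∪
      univ.image fun c : Kˣ => edgeHyperplane i₁ i₂ (c : K) := by
  ext W
  simp only [mem_union, mem_graphArr, mem_image, mem_univ, true_and,
    SimpleGraph.deleteEdges_adj, Set.mem_singleton_iff]
  constructor
  · rintro (⟨i, rfl⟩ | ⟨a, b, c, hab, hc, rfl⟩)
    · exact Or.inl (Or.inl ⟨i, rfl⟩)
    · by_cases he : s(a, b) = s(i₁, i₂)
      · rcases Sym2.eq_iff.1 he with ⟨rfl, rfl⟩ | ⟨rfl, rfl⟩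
        · exact Or.inr ⟨Units.mk0 c hc, rfl⟩
        · exact Or.inr ⟨Units.mk0 c⁻¹ (inv_ne_zero hc), (edgeHyperplane_swap hc).symm⟩
      · exact Or.inl (Or.inr ⟨a, b, c, ⟨hab, he⟩, hc, rfl⟩)
  · rintro ((⟨i, rfl⟩ | ⟨a, b, c, ⟨hab, -⟩, hc, rfl⟩) | ⟨c, rfl⟩)
    · exact Or.inl ⟨i, rfl⟩
    · exact Or.inr ⟨a, b, c, hab, hc, rfl⟩
    · exact Or.inr ⟨i₁, i₂, c, hadj, c.ne_zero, rfl⟩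

theorem disjoint_graphArr_deleteEdges [DecidableEq V] (hne : i₁ ≠ i₂) :
    Disjoint (graphArr K (G.deleteEdges {s(i₁, i₂)}))
      (univ.image fun c : Kˣ => edgeHyperplane i₁ i₂ (c : K)) := by
  refine disjoint_right.2 fun W hW hWB => ?_
  obtain ⟨c, -, rfl⟩ := mem_image.1 hW
  exact edgeHyperplane_notMem_graphArr_deleteEdges G hne c.ne_zero hWB

end Deletion

section Contraction

variable {V : Type} [DecidableEq V] {i₁ i₂ : V}

/-- `G/e` for `e = {i₁, i₂}`. -/
def contractEdge (G : SimpleGraph V) (i₁ i₂ : V) : SimpleGraph {i // i ≠ i₂} :=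
  SimpleGraph.fromRel fun a b => G.Adj a b ∨ ((a : V) = i₁ ∧ G.Adj i₂ b)

/-- The map `σ` sending `i₂` to `i₁`. -/
def contractVertex (hne : i₁ ≠ i₂) (j : V) : {i // i ≠ i₂} :=
  if h : j = i₂ then ⟨i₁, hne⟩ else ⟨j, h⟩

variable (hne : i₁ ≠ i₂)

@[simp] theorem contractVertex_self : contractVertex hne i₂ = ⟨i₁, hne⟩ := dif_pos rfl

@[simp] theorem contractVertex_of_ne {j : V} (hj : j ≠ i₂) : contractVertex hne j = ⟨j, hj⟩ :=
  dif_neg hj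

@[simp] theorem contractVertex_coe (j : {i // i ≠ i₂}) : contractVertex hne j = j :=
  contractVertex_of_ne hne j.2

theorem contractEdge_adj_iff (G : SimpleGraph V) {a' b' : {i // i ≠ i₂}} :
    (contractEdge G i₁ i₂).Adj a' b' ↔ ∃ a b, (G.deleteEdges {s(i₁, i₂)}).Adj a b ∧
      contractVertex hne a = a' ∧ contractVertex hne b = b' := by
  constructor
  · obtain ⟨a', ha'⟩ := a'
    obtain ⟨b', hb'⟩ := b'
    simp only [contractEdge, SimpleGraph.fromRel_adj, ne_eq, Subtype.mk.injEq]
    rintro ⟨hab', (hab | ⟨ha₁, hb⟩) | (hba | ⟨hb₁, ha⟩)⟩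
    · exact ⟨a', b', by simp [hab, ha', hb'], by simp [ha', hb']⟩
    · exact ⟨i₂, b', by simp [hb, hb', ← ha₁, Ne.symm hab'], by simp [ha₁, hb']⟩
    · exact ⟨a', b', by simp [hba.symm, ha', hb'], by simp [ha', hb']⟩
    · exact ⟨a', i₂, by simp [ha.symm, ha', ← hb₁, hab'], by simp [hb₁, ha']⟩
  · rintro ⟨a, b, hab, rfl, rfl⟩
    rw [SimpleGraph.deleteEdges_adj, Set.mem_singleton_iff, Sym2.eq_iff] at hab
    simp only [contractEdge, SimpleGraph.fromRel_adj, ne_eq, Subtype.ext_iff]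
    by_cases ha : a = i₂
    · have hb : b ≠ i₂ := fun hb => hab.1.ne (ha.trans hb.symm)
      have hb₁ : b ≠ i₁ := fun hb₁ => hab.2 (Or.inr ⟨ha, hb₁⟩)
      subst ha
      simp [hb, Ne.symm hb₁, hab.1]
    · by_cases hb : b = i₂
      · have ha₁ : a ≠ i₁ := fun ha₁ => hab.2 (Or.inl ⟨ha₁, hb⟩)
        subst hb
        simp [ha, ha₁, hab.1.symm]
      · simp [ha, hb, hab.1, hab.1.ne]

end Contraction

section Restriction

variable {K V : Type} [Field K] [DecidableEq V] {i₁ i₂ : V}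

def contractWeight (i₂ : V) (c : K) (j : V) : K :=
  if j = i₂ then c⁻¹ else 1

theorem contractWeight_ne_zero {c : K} (hc : c ≠ 0) (j : V) : contractWeight i₂ c j ≠ 0 := by
  unfold contractWeight
  split_ifs <;> simp [hc]

/-- Parametrises `x_{i₁} = c x_{i₂}` by the coordinates other than `x_{i₂} = c⁻¹ x_{i₁}`. -/
def hyperplaneEmbedding (hne : i₁ ≠ i₂) (c : K) : ({i // i ≠ i₂} → K) →ₗ[K] (V → K) :=
  LinearMap.pi fun j => contractWeight i₂ c j • LinearMap.proj (contractVertex hne j)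

variable (hne : i₁ ≠ i₂) {c : K}

@[simp] theorem hyperplaneEmbedding_apply (y : {i // i ≠ i₂} → K) (j : V) :
    hyperplaneEmbedding hne c y j = contractWeight i₂ c j * y (contractVertex hne j) :=
  rfl

theorem hyperplaneEmbedding_injective : Function.Injective (hyperplaneEmbedding hne c) := by
  intro y z h
  ext j
  simpa [contractWeight, j.2] using congrFun h j

theorem range_hyperplaneEmbedding (hc : c ≠ 0) :
    LinearMap.range (hyperplaneEmbedding hne c) = edgeHyperplane i₁ i₂ c := by
  ext x
  rw [LinearMap.mem_range, mem_edgeHyperplane]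
  constructor
  · rintro ⟨y, rfl⟩
    simp [contractWeight, hne, hc]
  · intro hx
    refine ⟨fun i => x i, funext fun j => ?_⟩
    by_cases hj : j = i₂
    · subst hj
      simp [contractWeight, hx, hc]
    · simp [contractWeight, hj]

theorem comap_hyperplaneEmbedding_coordHyperplane (hc : c ≠ 0) (j : V) :
    (coordHyperplane K j).comap (hyperplaneEmbedding hne c) =
      coordHyperplane K (contractVertex hne j) := by
  ext y
  simp [contractWeight_ne_zero hc]

theorem comap_hyperplaneEmbedding_edgeHyperplane (hc : c ≠ 0) (a b : V) (c' : K) :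
    (edgeHyperplane a b c').comap (hyperplaneEmbedding hne c) =
      edgeHyperplane (contractVertex hne a) (contractVertex hne b)
        (c' * contractWeight i₂ c b / contractWeight i₂ c a) := by
  ext y
  simp only [Submodule.mem_comap, mem_edgeHyperplane, hyperplaneEmbedding_apply]
  rw [div_mul_eq_mul_div, eq_div_iff (contractWeight_ne_zero hc a),
    mul_comm _ (contractWeight _ _ a), mul_assoc]

theorem image_comap_hyperplaneEmbedding_graphArr [Fintype K] [Fintype V] (G : SimpleGraph V)
    (hc : c ≠ 0) :
    (graphArr K (G.deleteEdges {s(i₁, i₂)})).image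
        (Submodule.comap (hyperplaneEmbedding hne c)) = graphArr K (contractEdge G i₁ i₂) := by
  have hw := contractWeight_ne_zero (i₂ := i₂) hc
  ext W
  rw [mem_image]
  constructor
  · rintro ⟨H, hH, rfl⟩
    rcases mem_graphArr.1 hH with ⟨j, rfl⟩ | ⟨a, b, c', hab, hc', rfl⟩
    · exact mem_graphArr.2 (Or.inl ⟨_, comap_hyperplaneEmbedding_coordHyperplane hne hc j⟩)
    · refine mem_graphArr.2 (Or.inr ⟨_, _, _,
        (contractEdge_adj_iff hne G).2 ⟨a, b, hab, rfl, rfl⟩, by simp [hc', hw],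
        comap_hyperplaneEmbedding_edgeHyperplane hne hc a b c'⟩)
  · intro hW
    rcases mem_graphArr.1 hW with ⟨j, rfl⟩ | ⟨a', b', c', hab', hc', rfl⟩
    · refine ⟨coordHyperplane K j, mem_graphArr.2 (Or.inl ⟨j, rfl⟩), ?_⟩
      rw [comap_hyperplaneEmbedding_coordHyperplane hne hc, contractVertex_coe]
    · obtain ⟨a, b, hab, rfl, rfl⟩ := (contractEdge_adj_iff hne G).1 hab'
      refine ⟨edgeHyperplane a b (c' * contractWeight i₂ c a / contractWeight i₂ c b),
        mem_graphArr.2 (Or.inr ⟨a, b, _, hab, by simp [hc', hw], rfl⟩), ?_⟩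
      rw [comap_hyperplaneEmbedding_edgeHyperplane hne hc]
      congr 1
      field_simp [hw]

end Restriction

theorem chiOn_edgeHyperplane_graphArr_deleteEdges {K V : Type} [Field K] [DecidableEq V]
    {i₁ i₂ : V} {c : K} [Fintype K] [Fintype V] (G : SimpleGraph V)
    (hne : i₁ ≠ i₂) (hc : c ≠ 0) (t : ℤ) :
    chiOn (edgeHyperplane i₁ i₂ c) (graphArr K (G.deleteEdges {s(i₁, i₂)})) t =
      chi (graphArr K (contractEdge G i₁ i₂)) t := by
  rw [← range_hyperplaneEmbedding hne hc, chiOn_range (hyperplaneEmbedding_injective hne),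
    image_comap_hyperplaneEmbedding_graphArr hne G hc]

/-- q-deletion-contraction for `S_G^q`.  For an edge `e = {i₁,i₂}`
of `G`, `χ(S_G^q, t) = χ(S_{G∖e}^q, t) − (q−1)·χ(S_{G/e}^q, t)`, where `G/e` is the
graph on `{1,…,ℓ}∖{i₂}` whose edges are the 2-element images `σ(f)` of edges `f` of
`G` under the map `σ` sending `i₂` to `i₁` and fixing everything else. -/
theorem stmt6 (ℓ : ℕ) (F : Type) [Field F] [Fintype F] (q : ℕ)
    (hq : Fintype.card F = q)
    (G : SimpleGraph (Fin ℓ)) (i₁ i₂ : Fin ℓ) (hadj : G.Adj i₁ i₂) (t : ℤ) :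
    chi (graphArr F G) t
      = chi (graphArr F (G.deleteEdges {s(i₁, i₂)})) t
        - ((q : ℤ) - 1) *
          chi (graphArr F (SimpleGraph.fromRel
            fun a b : {i : Fin ℓ // i ≠ i₂} =>
              G.Adj ↑a ↑b ∨ ((a : Fin ℓ) = i₁ ∧ G.Adj i₂ ↑b))) t := by
  have hne := G.ne_of_adj hadj
  set B := graphArr F (G.deleteEdges {s(i₁, i₂)})
  set C := univ.image fun c : Fˣ => edgeHyperplane i₁ i₂ (c : F) with hC_def
  have hC : (C.card : ℤ) = q - 1 := by
    rw [hC_def, card_image_of_injective (f := fun c : Fˣ => edgeHyperplane i₁ i₂ (c : F)) _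
      ((edgeHyperplane_injective hne).comp Units.val_injective),
      card_univ, ← hq, Fintype.card_eq_card_units_add_one (α := F)]
    push_cast
    ring
  have hpencil : ∀ W₁ ∈ C, ∀ W₂ ∈ C, W₁ ≠ W₂ →
      W₁ ⊓ W₂ = coordHyperplane F i₁ ⊓ coordHyperplane F i₂ := by
    simp only [C, mem_image]
    rintro _ ⟨c, -, rfl⟩ _ ⟨c', -, rfl⟩ h
    exact edgeHyperplane_inf_edgeHyperplane fun hcc => h (by rw [hcc])
  have hcontract : ∀ W ∈ C, chiOn W B t = chi (graphArr F (contractEdge G i₁ i₂)) t := by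
    simp only [C, mem_image]
    rintro _ ⟨c, -, rfl⟩
    exact chiOn_edgeHyperplane_graphArr_deleteEdges G hne c.ne_zero t
  have hK : chiOn (coordHyperplane F i₁ ⊓ coordHyperplane F i₂) B t = 0 :=
    chiOn_eq_zero_of_le (mem_graphArr.2 (Or.inl ⟨i₁, rfl⟩)) inf_le_left t
  rw [graphArr_eq_union_deleteEdges hadj, chi_union (disjoint_graphArr_deleteEdges hne),
    sum_powerset_neg_one_pow_mul_inf_of_pairwise_inf_eq ⟨_, mem_image_of_mem _ (mem_univ 1)⟩
      hpencil fun W => chiOn W B t, chiOn_top, hK, sum_congr rfl hcontract, sum_const,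
    nsmul_eq_mul, hC]
  unfold contractEdge
  ring
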